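/- (Claim 3: QSO1 implies QSO2.) Suppose the condition QSO1 holds for μ̂, and that μ̂(C) ≠ 0 for every pseudo-event full specification C of any region. Then the condition QSO2 also holds: for all pseudo-events A, B with pdom(A) ⊆ 𝒜 and pdom(B) ⊆ ℬ for regions 𝒜 ♮ ℬ, μ̂(A ∩ B ∩ C)·μ̂(C) = μ̂(A ∩ C)·μ̂(B ∩ C) for every C ∈ Φ_p(𝒫₂), where 𝒫₂ = (J⁻(𝒜) ∪ J⁻(ℬ)) \ (𝒜 ∪ ℬ) is the joint past. -/
import Mathlib


open Set MeasureTheory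

/-- A least-domain-of-decidability function `dom : Σ → 𝒫(𝕊)`, with its four
defining properties (i)–(iv).  Events are the measurable subsets of `Ω`. -/
structure DomSystem (Ω S : Type*) [MeasurableSpace Ω] where
  dom : Set Ω → Set S
  /-- (i): for a countable family of events whose domains are pairwise disjoint,
  the domain of the intersection is the (disjoint) union of the domains. -/
  prop_i : ∀ Λ : Set (Set Ω), Λ.Countable → (∀ X ∈ Λ, MeasurableSet X) →
    (∀ X ∈ Λ, ∀ Y ∈ Λ, X ≠ Y → Disjoint (dom X) (dom Y)) →
    dom (⋂₀ Λ) = ⋃ X ∈ Λ, dom X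
  /-- (ii): for a countable family of events all having the same domain `D`,
  the domain of the intersection is contained in `D`. -/
  prop_ii : ∀ (Λ : Set (Set Ω)) (D : Set S), Λ.Countable →
    (∀ X ∈ Λ, MeasurableSet X) → (∀ X ∈ Λ, dom X = D) → dom (⋂₀ Λ) ⊆ D
  /-- (iii): complementation preserves the domain. -/
  prop_iii : ∀ X : Set Ω, MeasurableSet X → dom Xᶜ = dom X
  /-- (iv): an event whose domain is a disjoint union `𝒳 ⊔ 𝒴` lies in the σ-algebra
  generated by `Γ(𝒳) ∪ Γ(𝒴)`, where `Γ(𝒳) = {X ∈ Σ : dom X ⊆ 𝒳}`. -/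
  prop_iv : ∀ Z : Set Ω, MeasurableSet Z → ∀ 𝒳 𝒴 : Set S, Disjoint 𝒳 𝒴 →
    dom Z = 𝒳 ∪ 𝒴 →
    MeasurableSet[MeasurableSpace.generateFrom
      ({X : Set Ω | MeasurableSet X ∧ dom X ⊆ 𝒳} ∪
        {X : Set Ω | MeasurableSet X ∧ dom X ⊆ 𝒴})] Z

/-- A full specification of a region `R ⊆ 𝕊`: a nonempty event `F` with `dom F ⊆ R`
that decides every event decidable within `R`. -/
def IsFullSpec {Ω S : Type*} [MeasurableSpace Ω] (dom : Set Ω → Set S)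
    (R : Set S) (F : Set Ω) : Prop :=
  MeasurableSet F ∧ F.Nonempty ∧ dom F ⊆ R ∧
    ∀ X : Set Ω, MeasurableSet X → dom X ⊆ R → F ⊆ X ∨ F ⊆ Xᶜ

/-- The restriction `Γ_R(A)` of an event `A` to a region `R`: the intersection of all
events `Z` with `A ⊆ Z` and `dom Z ⊆ R`. -/
def restr {Ω S : Type*} [MeasurableSpace Ω] (dom : Set Ω → Set S)
    (R : Set S) (A : Set Ω) : Set Ω :=
  ⋂₀ {Z : Set Ω | MeasurableSet Z ∧ A ⊆ Z ∧ dom Z ⊆ R}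

/-- A pseudo-event full specification of a region `R ⊆ 𝕊`: a subset of `Ω × Ω` that is
the product `G × H` of two event full specifications `G`, `H` of `R`. -/
def IsPseudoFullSpec {Ω S : Type*} [MeasurableSpace Ω] (dom : Set Ω → Set S)
    (R : Set S) (F : Set (Ω × Ω)) : Prop :=
  ∃ G H : Set Ω, IsFullSpec dom R G ∧ IsFullSpec dom R H ∧ F = G ×ˢ H

/-- The causal past `J⁻(𝒳)` of a region in the causal structure `𝕊`. -/
def causalPast {S : Type*} [PartialOrder S] (𝒳 : Set S) : Set S :=
  {s | ∃ x ∈ 𝒳, s ≤ x}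

/-- Two regions are spacelike, `𝒳 ♮ 𝒴`, if `J⁻(𝒳) ∩ 𝒴 = ∅` and `J⁻(𝒴) ∩ 𝒳 = ∅`. -/
def Spacelike {S : Type*} [PartialOrder S] (𝒳 𝒴 : Set S) : Prop :=
  causalPast 𝒳 ∩ 𝒴 = ∅ ∧ causalPast 𝒴 ∩ 𝒳 = ∅

/-- Quantum screening off, QSO1: for all pseudo-events `A = A₁ × A₂`, `B = B₁ × B₂`
with `pdom A ⊆ 𝒜`, `pdom B ⊆ ℬ` for spacelike regions `𝒜 ♮ ℬ`,
`μ̂(A ∩ B ∩ C)·μ̂(C) = μ̂(A ∩ C)·μ̂(B ∩ C)` for every pseudo-event full specification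
`C` of the mutual past `𝒫₁ = J⁻(𝒜) ∩ J⁻(ℬ)`. -/
def QSO1 {Ω S : Type*} [MeasurableSpace Ω] [PartialOrder S]
    (dom : Set Ω → Set S) (μh : Set (Ω × Ω) → ℂ) : Prop :=
  ∀ A₁ A₂ B₁ B₂ : Set Ω, MeasurableSet A₁ → MeasurableSet A₂ →
    MeasurableSet B₁ → MeasurableSet B₂ →
    ∀ 𝒜 ℬ : Set S, dom A₁ ∪ dom A₂ ⊆ 𝒜 → dom B₁ ∪ dom B₂ ⊆ ℬ → Spacelike 𝒜 ℬ →
      ∀ C : Set (Ω × Ω), IsPseudoFullSpec dom (causalPast 𝒜 ∩ causalPast ℬ) C →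
        μh ((A₁ ×ˢ A₂) ∩ (B₁ ×ˢ B₂) ∩ C) * μh C =
          μh ((A₁ ×ˢ A₂) ∩ C) * μh ((B₁ ×ˢ B₂) ∩ C)

/-- Quantum screening off, QSO2: as QSO1, but with pseudo-event full specifications of
the joint past `𝒫₂ = (J⁻(𝒜) ∪ J⁻(ℬ)) \ (𝒜 ∪ ℬ)`. -/
def QSO2 {Ω S : Type*} [MeasurableSpace Ω] [PartialOrder S]
    (dom : Set Ω → Set S) (μh : Set (Ω × Ω) → ℂ) : Prop :=
  ∀ A₁ A₂ B₁ B₂ : Set Ω, MeasurableSet A₁ → MeasurableSet A₂ →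
    MeasurableSet B₁ → MeasurableSet B₂ →
    ∀ 𝒜 ℬ : Set S, dom A₁ ∪ dom A₂ ⊆ 𝒜 → dom B₁ ∪ dom B₂ ⊆ ℬ → Spacelike 𝒜 ℬ →
      ∀ C : Set (Ω × Ω),
        IsPseudoFullSpec dom ((causalPast 𝒜 ∪ causalPast ℬ) \ (𝒜 ∪ ℬ)) C →
          μh ((A₁ ×ˢ A₂) ∩ (B₁ ×ˢ B₂) ∩ C) * μh C =
            μh ((A₁ ×ˢ A₂) ∩ C) * μh ((B₁ ×ˢ B₂) ∩ C)

section Aux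

variable {Ω S : Type*} [MeasurableSpace Ω]

/-- Any event is contained in its restriction to a region. -/
lemma subset_restr (dom : Set Ω → Set S) (R : Set S) (A : Set Ω) :
    A ⊆ restr dom R A := by
  intro a ha
  exact Set.mem_sInter.2 fun Z hZ => hZ.2.1 ha

/-- If `Z` is an event containing `A` with `dom Z ⊆ R`, then `restr dom R A ⊆ Z`. -/
lemma restr_subset_of_mem {dom : Set Ω → Set S} {R : Set S} {A Z : Set Ω}
    (hm : MeasurableSet Z) (hAZ : A ⊆ Z) (hd : dom Z ⊆ R) :
    restr dom R A ⊆ Z :=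
  Set.sInter_subset_of_mem ⟨hm, hAZ, hd⟩

/-- The restriction of a full specification of `R` to a subregion `R'` is a full
specification of `R'`. -/
lemma restr_fullSpec (D : DomSystem Ω S)
    (hres : ∀ A : Set Ω, MeasurableSet A → ∀ R : Set S,
      MeasurableSet (restr D.dom R A) ∧ D.dom (restr D.dom R A) ⊆ R)
    {R R' : Set S} {G : Set Ω} (hG : IsFullSpec D.dom R G) (hsub : R' ⊆ R) :
    IsFullSpec D.dom R' (restr D.dom R' G) := by
  obtain ⟨hGm, hGne, hGdom, hGdec⟩ := hG
  refine ⟨(hres G hGm R').1, hGne.mono (subset_restr _ _ _), (hres G hGm R').2, ?_⟩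
  intro X hXm hXd
  rcases hGdec X hXm (hXd.trans hsub) with h | h
  · exact Or.inl (restr_subset_of_mem hXm h hXd)
  · refine Or.inr (restr_subset_of_mem hXm.compl h ?_)
    rw [D.prop_iii X hXm]; exact hXd

/-- A full specification of a disjoint union `R = R₁ ⊔ R₂` factors as the
intersection of its restrictions to `R₁` and `R₂`. -/
lemma fullSpec_split (D : DomSystem Ω S)
    {R R₁ R₂ : Set S} {G : Set Ω} (hG : IsFullSpec D.dom R G)
    (hdisj : Disjoint R₁ R₂) (hun : R = R₁ ∪ R₂) :
    G = restr D.dom R₁ G ∩ restr D.dom R₂ G := by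
  obtain ⟨hGm, hGne, hGdom, hGdec⟩ := hG
  set Γ₁ := restr D.dom R₁ G with hΓ₁
  set Γ₂ := restr D.dom R₂ G with hΓ₂
  refine Set.Subset.antisymm
    (Set.subset_inter (subset_restr _ _ _) (subset_restr _ _ _)) ?_
  -- use prop (iv)
  have hXY : D.dom G = (D.dom G ∩ R₁) ∪ (D.dom G ∩ R₂) := by
    rw [← Set.inter_union_distrib_left, ← hun]
    exact (Set.inter_eq_left.2 hGdom).symm
  have hd : Disjoint (D.dom G ∩ R₁) (D.dom G ∩ R₂) :=
    hdisj.mono Set.inter_subset_right Set.inter_subset_right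
  have hiv := D.prop_iv G hGm _ _ hd hXY
  -- the class of events "decided compatibly by `G` and `Γ₁ ∩ Γ₂`" is a σ-algebra
  set P : Set Ω → Prop := fun Z => (G ⊆ Z ∧ Γ₁ ∩ Γ₂ ⊆ Z) ∨ (G ⊆ Zᶜ ∧ Γ₁ ∩ Γ₂ ⊆ Zᶜ)
    with hP
  have hPempty : P ∅ := Or.inr (by simp)
  have hPcompl : ∀ Z, P Z → P Zᶜ := by
    rintro Z (h | h)
    · exact Or.inr (by simpa using h)
    · exact Or.inl (by simpa using h)
  have hPiUnion : ∀ f : ℕ → Set Ω, (∀ n, P (f n)) → P (⋃ n, f n) := by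
    intro f hf
    by_cases hex : ∃ n, G ⊆ f n ∧ Γ₁ ∩ Γ₂ ⊆ f n
    · obtain ⟨n, h1, h2⟩ := hex
      exact Or.inl ⟨h1.trans (Set.subset_iUnion f n),
        h2.trans (Set.subset_iUnion f n)⟩
    · refine Or.inr ⟨?_, ?_⟩
      · rw [Set.compl_iUnion]
        refine Set.subset_iInter fun n => ?_
        rcases hf n with h | h
        · exact absurd ⟨n, h⟩ hex
        · exact h.1
      · rw [Set.compl_iUnion]
        refine Set.subset_iInter fun n => ?_
        rcases hf n with h | h
        · exact absurd ⟨n, h⟩ hex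
        · exact h.2
  have hbasic : ∀ Z ∈
      ({X : Set Ω | MeasurableSet X ∧ D.dom X ⊆ D.dom G ∩ R₁} ∪
        {X : Set Ω | MeasurableSet X ∧ D.dom X ⊆ D.dom G ∩ R₂}), P Z := by
    rintro Z (⟨hZm, hZd⟩ | ⟨hZm, hZd⟩)
    · have hZR : D.dom Z ⊆ R := (hZd.trans Set.inter_subset_right).trans
        (hun ▸ Set.subset_union_left)
      rcases hGdec Z hZm hZR with h | h
      · exact Or.inl ⟨h, Set.inter_subset_left.trans
          (restr_subset_of_mem hZm h (hZd.trans Set.inter_subset_right))⟩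
      · refine Or.inr ⟨h, Set.inter_subset_left.trans
          (restr_subset_of_mem hZm.compl h ?_)⟩
        rw [D.prop_iii Z hZm]; exact hZd.trans Set.inter_subset_right
    · have hZR : D.dom Z ⊆ R := (hZd.trans Set.inter_subset_right).trans
        (hun ▸ Set.subset_union_right)
      rcases hGdec Z hZm hZR with h | h
      · exact Or.inl ⟨h, Set.inter_subset_right.trans
          (restr_subset_of_mem hZm h (hZd.trans Set.inter_subset_right))⟩
      · refine Or.inr ⟨h, Set.inter_subset_right.trans
          (restr_subset_of_mem hZm.compl h ?_)⟩
        rw [D.prop_iii Z hZm]; exact hZd.trans Set.inter_subset_right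
  have hPG : P G :=
    MeasurableSpace.generateFrom_le (m := ⟨P, hPempty, hPcompl, hPiUnion⟩) hbasic _ hiv
  rcases hPG with h | h
  · exact h.2
  · obtain ⟨ω, hω⟩ := hGne
    exact absurd (h.1 hω) (by simpa using hω)

/-- Domain of a binary intersection from prop (i). -/
lemma dom_inter_subset (D : DomSystem Ω S) {X Y : Set Ω} {U V : Set S}
    (hX : MeasurableSet X) (hY : MeasurableSet Y)
    (hXU : D.dom X ⊆ U) (hYV : D.dom Y ⊆ V) (hUV : Disjoint U V) :
    D.dom (X ∩ Y) ⊆ U ∪ V := by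
  have hcnt : ({X, Y} : Set (Set Ω)).Countable :=
    (Set.countable_singleton Y).insert X
  have hmeas : ∀ Z ∈ ({X, Y} : Set (Set Ω)), MeasurableSet Z := by
    rintro Z (rfl | rfl) <;> assumption
  have hdisj : ∀ Z ∈ ({X, Y} : Set (Set Ω)), ∀ W ∈ ({X, Y} : Set (Set Ω)),
      Z ≠ W → Disjoint (D.dom Z) (D.dom W) := by
    rintro Z (rfl | rfl) W (rfl | rfl) hne
    · exact absurd rfl hne
    · exact hUV.mono hXU hYV
    · exact (hUV.mono hXU hYV).symm
    · exact absurd rfl hne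
  have h := D.prop_i {X, Y} hcnt hmeas hdisj
  have h2 : ⋂₀ ({X, Y} : Set (Set Ω)) = X ∩ Y := Set.sInter_pair X Y
  rw [h2] at h
  rw [h]
  simp only [Set.mem_insert_iff, Set.mem_singleton_iff, Set.iUnion_iUnion_eq_or_left,
    Set.iUnion_iUnion_eq_left]
  exact Set.union_subset (hXU.trans Set.subset_union_left)
    (hYV.trans Set.subset_union_right)

/-- Enlarging a region by part of its causal past does not change the causal past. -/
lemma causalPast_union_eq {S : Type*} [PartialOrder S] {𝒜 Z : Set S}
    (h : Z ⊆ causalPast 𝒜) : causalPast (𝒜 ∪ Z) = causalPast 𝒜 := by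
  ext s
  constructor
  · rintro ⟨x, hx | hx, hsx⟩
    · exact ⟨x, hx, hsx⟩
    · obtain ⟨a, ha, hxa⟩ := h hx
      exact ⟨a, ha, hsx.trans hxa⟩
  · rintro ⟨a, ha, hsa⟩
    exact ⟨a, Or.inl ha, hsa⟩

end Aux

/-- Claim 3: QSO1 implies QSO2, assuming `μ̂ C ≠ 0` for every pseudo-event full
specification `C` of any region, that singletons are events, and that restrictions of
events are events decidable in the restricting region. -/
theorem stmt15 {Ω S : Type*} [MeasurableSpace Ω] [PartialOrder S]
    (D : DomSystem Ω S)
    (hsing : ∀ ω : Ω, MeasurableSet ({ω} : Set Ω))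
    (hres : ∀ A : Set Ω, MeasurableSet A → ∀ R : Set S,
      MeasurableSet (restr D.dom R A) ∧ D.dom (restr D.dom R A) ⊆ R)
    (μh : Set (Ω × Ω) → ℂ)
    (hnz : ∀ (R : Set S) (C : Set (Ω × Ω)), IsPseudoFullSpec D.dom R C → μh C ≠ 0)
    (h1 : QSO1 D.dom μh) : QSO2 D.dom μh := by
  intro A₁ A₂ B₁ B₂ hA₁ hA₂ hB₁ hB₂ 𝒜 ℬ hAdom hBdom hsl C hC
  obtain ⟨G, H, hG, hH, rfl⟩ := hC
  obtain ⟨hslA, hslB⟩ := hsl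
  set P₂ : Set S := (causalPast 𝒜 ∪ causalPast ℬ) \ (𝒜 ∪ ℬ) with hP₂def
  set P₁ : Set S := causalPast 𝒜 ∩ causalPast ℬ with hP₁def
  set Q𝒜 : Set S := P₂ ∩ (causalPast 𝒜 \ causalPast ℬ) with hQ𝒜def
  set Qℬ : Set S := P₂ ∩ (causalPast ℬ \ causalPast 𝒜) with hQℬdef
  -- region facts
  have hP₁P₂ : P₁ ⊆ P₂ := by
    intro s hs
    refine ⟨Or.inl hs.1, ?_⟩
    rintro (h | h)
    · exact absurd ⟨hs.2, h⟩ (Set.eq_empty_iff_forall_notMem.1 hslB s)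
    · exact absurd ⟨hs.1, h⟩ (Set.eq_empty_iff_forall_notMem.1 hslA s)
  have hP₂split : P₂ = P₁ ∪ (P₂ \ P₁) := by
    rw [Set.union_diff_cancel' (le_refl P₁) hP₁P₂]
  have hP₁disj : Disjoint P₁ (P₂ \ P₁) := Set.disjoint_sdiff_right.mono_left le_rfl
  have hQsplit : P₂ \ P₁ = Q𝒜 ∪ Qℬ := by
    ext s
    constructor
    · rintro ⟨hs, hns⟩
      rcases hs.1 with h | h
      · exact Or.inl ⟨hs, h, fun hb => hns ⟨h, hb⟩⟩
      · exact Or.inr ⟨hs, h, fun ha => hns ⟨ha, h⟩⟩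
    · rintro (⟨hs, h1, h2⟩ | ⟨hs, h1, h2⟩)
      · exact ⟨hs, fun hp => h2 hp.2⟩
      · exact ⟨hs, fun hp => h2 hp.1⟩
  have hQdisj : Disjoint Q𝒜 Qℬ := by
    rw [Set.disjoint_left]
    rintro s ⟨_, _, h1⟩ ⟨_, h2, _⟩
    exact h1 h2
  have hQ𝒜past : Q𝒜 ⊆ causalPast 𝒜 := fun s hs => hs.2.1
  have hQℬpast : Qℬ ⊆ causalPast ℬ := fun s hs => hs.2.1
  have hApast : causalPast (𝒜 ∪ Q𝒜) = causalPast 𝒜 := causalPast_union_eq hQ𝒜past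
  have hBpast : causalPast (ℬ ∪ Qℬ) = causalPast ℬ := causalPast_union_eq hQℬpast
  have hP₂A : Disjoint P₂ 𝒜 := by
    rw [Set.disjoint_left]; rintro s ⟨_, h⟩ ha; exact h (Or.inl ha)
  have hP₂B : Disjoint P₂ ℬ := by
    rw [Set.disjoint_left]; rintro s ⟨_, h⟩ hb; exact h (Or.inr hb)
  have hdisjAQ : Disjoint 𝒜 Q𝒜 :=
    (hP₂A.mono_left (Set.inter_subset_left : Q𝒜 ⊆ P₂)).symm
  have hdisjBQ : Disjoint ℬ Qℬ :=
    (hP₂B.mono_left (Set.inter_subset_left : Qℬ ⊆ P₂)).symm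
  have hsl' : Spacelike (𝒜 ∪ Q𝒜) (ℬ ∪ Qℬ) := by
    constructor
    · rw [hApast]
      apply Set.eq_empty_iff_forall_notMem.2
      rintro s ⟨hpa, hb | hq⟩
      · exact absurd ⟨hpa, hb⟩ (Set.eq_empty_iff_forall_notMem.1 hslA s)
      · exact hq.2.2 hpa
    · rw [hBpast]
      apply Set.eq_empty_iff_forall_notMem.2
      rintro s ⟨hpb, ha | hq⟩
      · exact absurd ⟨hpb, ha⟩ (Set.eq_empty_iff_forall_notMem.1 hslB s)
      · exact hq.2.2 hpb
  have hmutual : causalPast (𝒜 ∪ Q𝒜) ∩ causalPast (ℬ ∪ Qℬ) = P₁ := by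
    rw [hApast, hBpast]
  -- decompose G and H
  obtain ⟨hGm, hGne, hGdom, hGdec⟩ := id hG
  obtain ⟨hHm, hHne, hHdom, hHdec⟩ := id hH
  set G₁ := restr D.dom P₁ G with hG₁def
  set Gq := restr D.dom (P₂ \ P₁) G with hGqdef
  set G𝒜 := restr D.dom Q𝒜 Gq with hG𝒜def
  set Gℬ := restr D.dom Qℬ Gq with hGℬdef
  set H₁ := restr D.dom P₁ H with hH₁def
  set Hq := restr D.dom (P₂ \ P₁) H with hHqdef
  set H𝒜 := restr D.dom Q𝒜 Hq with hH𝒜def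
  set Hℬ := restr D.dom Qℬ Hq with hHℬdef
  have hGqfs : IsFullSpec D.dom (P₂ \ P₁) Gq :=
    restr_fullSpec D hres hG Set.diff_subset
  have hHqfs : IsFullSpec D.dom (P₂ \ P₁) Hq :=
    restr_fullSpec D hres hH Set.diff_subset
  have hG₁fs : IsFullSpec D.dom P₁ G₁ := restr_fullSpec D hres hG hP₁P₂
  have hH₁fs : IsFullSpec D.dom P₁ H₁ := restr_fullSpec D hres hH hP₁P₂
  have hGsplit : G = G₁ ∩ Gq := fullSpec_split D hG hP₁disj hP₂split
  have hHsplit : H = H₁ ∩ Hq := fullSpec_split D hH hP₁disj hP₂split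
  have hGqsplit : Gq = G𝒜 ∩ Gℬ := fullSpec_split D hGqfs hQdisj hQsplit
  have hHqsplit : Hq = H𝒜 ∩ Hℬ := fullSpec_split D hHqfs hQdisj hQsplit
  have hGeq : G = G₁ ∩ G𝒜 ∩ Gℬ := by
    rw [hGsplit, hGqsplit, Set.inter_assoc]
  have hHeq : H = H₁ ∩ H𝒜 ∩ Hℬ := by
    rw [hHsplit, hHqsplit, Set.inter_assoc]
  -- measurability and domains of the pieces
  have hG₁m : MeasurableSet G₁ := (hres G hGm P₁).1
  have hH₁m : MeasurableSet H₁ := (hres H hHm P₁).1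
  have hGqm : MeasurableSet Gq := (hres G hGm _).1
  have hHqm : MeasurableSet Hq := (hres H hHm _).1
  have hG𝒜m : MeasurableSet G𝒜 := (hres Gq hGqm Q𝒜).1
  have hGℬm : MeasurableSet Gℬ := (hres Gq hGqm Qℬ).1
  have hH𝒜m : MeasurableSet H𝒜 := (hres Hq hHqm Q𝒜).1
  have hHℬm : MeasurableSet Hℬ := (hres Hq hHqm Qℬ).1
  have hG𝒜d : D.dom G𝒜 ⊆ Q𝒜 := (hres Gq hGqm Q𝒜).2
  have hGℬd : D.dom Gℬ ⊆ Qℬ := (hres Gq hGqm Qℬ).2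
  have hH𝒜d : D.dom H𝒜 ⊆ Q𝒜 := (hres Hq hHqm Q𝒜).2
  have hHℬd : D.dom Hℬ ⊆ Qℬ := (hres Hq hHqm Qℬ).2
  -- the mutual-past pseudo full specification
  set C₁ : Set (Ω × Ω) := G₁ ×ˢ H₁ with hC₁def
  have hC₁fs : IsPseudoFullSpec D.dom (causalPast (𝒜 ∪ Q𝒜) ∩ causalPast (ℬ ∪ Qℬ))
      C₁ := by
    rw [hmutual]; exact ⟨G₁, H₁, hG₁fs, hH₁fs, rfl⟩
  have hk : μh C₁ ≠ 0 := hnz _ _ (hmutual ▸ hC₁fs)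
  -- domain bounds for the enlarged pseudo-events
  have hdA₁ : D.dom (A₁ ∩ G𝒜) ⊆ 𝒜 ∪ Q𝒜 :=
    dom_inter_subset D hA₁ hG𝒜m (fun s hs => hAdom (Or.inl hs)) hG𝒜d hdisjAQ
  have hdA₂ : D.dom (A₂ ∩ H𝒜) ⊆ 𝒜 ∪ Q𝒜 :=
    dom_inter_subset D hA₂ hH𝒜m (fun s hs => hAdom (Or.inr hs)) hH𝒜d hdisjAQ
  have hdB₁ : D.dom (B₁ ∩ Gℬ) ⊆ ℬ ∪ Qℬ :=
    dom_inter_subset D hB₁ hGℬm (fun s hs => hBdom (Or.inl hs)) hGℬd hdisjBQ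
  have hdB₂ : D.dom (B₂ ∩ Hℬ) ⊆ ℬ ∪ Qℬ :=
    dom_inter_subset D hB₂ hHℬm (fun s hs => hBdom (Or.inr hs)) hHℬd hdisjBQ
  have hdCA : D.dom G𝒜 ∪ D.dom H𝒜 ⊆ 𝒜 ∪ Q𝒜 :=
    Set.union_subset (hG𝒜d.trans Set.subset_union_right)
      (hH𝒜d.trans Set.subset_union_right)
  have hdCB : D.dom Gℬ ∪ D.dom Hℬ ⊆ ℬ ∪ Qℬ :=
    Set.union_subset (hGℬd.trans Set.subset_union_right)
      (hHℬd.trans Set.subset_union_right)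
  have hdA : D.dom (A₁ ∩ G𝒜) ∪ D.dom (A₂ ∩ H𝒜) ⊆ 𝒜 ∪ Q𝒜 :=
    Set.union_subset hdA₁ hdA₂
  have hdB : D.dom (B₁ ∩ Gℬ) ∪ D.dom (B₂ ∩ Hℬ) ⊆ ℬ ∪ Qℬ :=
    Set.union_subset hdB₁ hdB₂
  -- the four QSO1 instances
  have e1 := h1 (A₁ ∩ G𝒜) (A₂ ∩ H𝒜) (B₁ ∩ Gℬ) (B₂ ∩ Hℬ)
    (hA₁.inter hG𝒜m) (hA₂.inter hH𝒜m) (hB₁.inter hGℬm) (hB₂.inter hHℬm)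
    (𝒜 ∪ Q𝒜) (ℬ ∪ Qℬ) hdA hdB hsl' C₁ hC₁fs
  have e2 := h1 G𝒜 H𝒜 Gℬ Hℬ hG𝒜m hH𝒜m hGℬm hHℬm
    (𝒜 ∪ Q𝒜) (ℬ ∪ Qℬ) hdCA hdCB hsl' C₁ hC₁fs
  have e3 := h1 (A₁ ∩ G𝒜) (A₂ ∩ H𝒜) Gℬ Hℬ
    (hA₁.inter hG𝒜m) (hA₂.inter hH𝒜m) hGℬm hHℬm
    (𝒜 ∪ Q𝒜) (ℬ ∪ Qℬ) hdA hdCB hsl' C₁ hC₁fs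
  have e4 := h1 G𝒜 H𝒜 (B₁ ∩ Gℬ) (B₂ ∩ Hℬ) hG𝒜m hH𝒜m (hB₁.inter hGℬm)
    (hB₂.inter hHℬm) (𝒜 ∪ Q𝒜) (ℬ ∪ Qℬ) hdCA hdB hsl' C₁ hC₁fs
  -- rewrite the goal's sets in the grouped form
  have s1 : (A₁ ×ˢ A₂) ∩ (B₁ ×ˢ B₂) ∩ (G ×ˢ H) =
      ((A₁ ∩ G𝒜) ×ˢ (A₂ ∩ H𝒜)) ∩ ((B₁ ∩ Gℬ) ×ˢ (B₂ ∩ Hℬ)) ∩ C₁ := by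
    rw [hGeq, hHeq, hC₁def]
    ext ⟨x, y⟩
    simp only [Set.mem_inter_iff, Set.mem_prod]
    tauto
  have s2 : (G ×ˢ H : Set (Ω × Ω)) = (G𝒜 ×ˢ H𝒜) ∩ (Gℬ ×ˢ Hℬ) ∩ C₁ := by
    rw [hGeq, hHeq, hC₁def]
    ext ⟨x, y⟩
    simp only [Set.mem_inter_iff, Set.mem_prod]
    tauto
  have s3 : (A₁ ×ˢ A₂) ∩ (G ×ˢ H) =
      ((A₁ ∩ G𝒜) ×ˢ (A₂ ∩ H𝒜)) ∩ (Gℬ ×ˢ Hℬ) ∩ C₁ := by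
    rw [hGeq, hHeq, hC₁def]
    ext ⟨x, y⟩
    simp only [Set.mem_inter_iff, Set.mem_prod]
    tauto
  have s4 : (B₁ ×ˢ B₂) ∩ (G ×ˢ H) =
      (G𝒜 ×ˢ H𝒜) ∩ ((B₁ ∩ Gℬ) ×ˢ (B₂ ∩ Hℬ)) ∩ C₁ := by
    rw [hGeq, hHeq, hC₁def]
    ext ⟨x, y⟩
    simp only [Set.mem_inter_iff, Set.mem_prod]
    tauto
  rw [s1, s3, s4, s2]
  have key : μh (((A₁ ∩ G𝒜) ×ˢ (A₂ ∩ H𝒜)) ∩ ((B₁ ∩ Gℬ) ×ˢ (B₂ ∩ Hℬ)) ∩ C₁) *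
        μh ((G𝒜 ×ˢ H𝒜) ∩ (Gℬ ×ˢ Hℬ) ∩ C₁) * (μh C₁ * μh C₁) =
      μh (((A₁ ∩ G𝒜) ×ˢ (A₂ ∩ H𝒜)) ∩ (Gℬ ×ˢ Hℬ) ∩ C₁) *
        μh ((G𝒜 ×ˢ H𝒜) ∩ ((B₁ ∩ Gℬ) ×ˢ (B₂ ∩ Hℬ)) ∩ C₁) * (μh C₁ * μh C₁) := by
    linear_combination
      (μh ((G𝒜 ×ˢ H𝒜) ∩ (Gℬ ×ˢ Hℬ) ∩ C₁) * μh C₁) * e1 +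
      (μh (((A₁ ∩ G𝒜) ×ˢ (A₂ ∩ H𝒜)) ∩ C₁) *
        μh (((B₁ ∩ Gℬ) ×ˢ (B₂ ∩ Hℬ)) ∩ C₁)) * e2 -
      (μh ((G𝒜 ×ˢ H𝒜) ∩ ((B₁ ∩ Gℬ) ×ˢ (B₂ ∩ Hℬ)) ∩ C₁) * μh C₁) * e3 -
      (μh (((A₁ ∩ G𝒜) ×ˢ (A₂ ∩ H𝒜)) ∩ C₁) * μh ((Gℬ ×ˢ Hℬ) ∩ C₁)) * e4
  exact mul_right_cancel₀ (mul_ne_zero hk hk) key
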